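/- arXiv:0707.2008 — 4 statements merged into one kernel-verified Lean document; each statement's English description precedes it below -/
import Mathlib

section
/- Let H be a real Hilbert space, let C be a family of closed subspaces of H containing the zero subspace that has the Minimal Approximation Property, let F = (f_1, …, f_m) be a finite family of vectors in H, and let l ≥ 1. Then there exists a bundle V_0 = (V_1^0, …, V_l^0) with each V_j^0 ∈ C such that e(F, V_0) ≤ e(F, V) for every bundle V = (V_1, …, V_l) with components in C. -/
open Metric Finset

/-- Total squared distance from a finite family `F` to a closed subspace `V`. -/
noncomputable def totalErr {H : Type*} [NormedAddCommGroup H] [InnerProductSpace ℝ H]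
    {m : ℕ} (F : Fin m → H) (V : Submodule ℝ H) : ℝ :=
  ∑ i, Metric.infDist (F i) (V : Set H) ^ 2

/-- The Minimal Approximation Property for a family `C` of subspaces of `H`. -/
def HasMAP {H : Type*} [NormedAddCommGroup H] [InnerProductSpace ℝ H]
    (C : Set (Submodule ℝ H)) : Prop :=
  ∀ (m : ℕ) (F : Fin m → H), ∃ V0 ∈ C, ∀ V ∈ C, totalErr F V0 ≤ totalErr F V

/-- The objective `e(F, V)`: sum over the data of the squared distance to the
closest subspace of the bundle. -/
noncomputable def eBundle {H : Type*} [NormedAddCommGroup H] [InnerProductSpace ℝ H]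
    {m l : ℕ} (F : Fin m → H) (V : Fin l → Submodule ℝ H) : ℝ :=
  ∑ i, ⨅ j, Metric.infDist (F i) (V j : Set H) ^ 2

/-- `Γ(c, V)` for a labeling `c` and a bundle `V`. -/
noncomputable def Gamma {H : Type*} [NormedAddCommGroup H] [InnerProductSpace ℝ H]
    {m l : ℕ} (F : Fin m → H) (c : Fin m → Fin l) (V : Fin l → Submodule ℝ H) : ℝ :=
  ∑ i, Metric.infDist (F i) (V (c i) : Set H) ^ 2

/-- `V ∈ W(c)`: `V` is a best bundle for the labeling `c`. -/
def IsBestBundle {H : Type*} [NormedAddCommGroup H] [InnerProductSpace ℝ H]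
    (C : Set (Submodule ℝ H)) {m l : ℕ} (F : Fin m → H)
    (c : Fin m → Fin l) (V : Fin l → Submodule ℝ H) : Prop :=
  (∀ j, V j ∈ C) ∧ ∀ j, ∀ W ∈ C,
    ∑ i ∈ Finset.univ.filter (fun i => c i = j), Metric.infDist (F i) (V j : Set H) ^ 2 ≤
      ∑ i ∈ Finset.univ.filter (fun i => c i = j), Metric.infDist (F i) (W : Set H) ^ 2

/-- A `Γ`-minimal pair. -/
def IsGammaMinimal {H : Type*} [NormedAddCommGroup H] [InnerProductSpace ℝ H]
    (C : Set (Submodule ℝ H)) {m l : ℕ} (F : Fin m → H)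
    (c0 : Fin m → Fin l) (V0 : Fin l → Submodule ℝ H) : Prop :=
  IsBestBundle C F c0 V0 ∧
    ∀ (c : Fin m → Fin l) (V : Fin l → Submodule ℝ H),
      IsBestBundle C F c V → Gamma F c0 V0 ≤ Gamma F c V

/-!
For a fixed labelling `c : Fin m → Fin l`, the Minimal Approximation Property applied to each
cluster `{i | c i = j}` gives a best bundle for `c`. There are finitely many labellings, so some
labelling `c₀` together with its best bundle `V₀` minimises `Γ`. Any admissible bundle `V` is then
beaten by `V₀`: label each point by a nearest subspace of `V`, so that `Γ(c, V) = e(F, V)`, and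
`e(F, V₀) ≤ Γ(c₀, V₀) ≤ Γ(c, W) ≤ Γ(c, V)` for a best bundle `W` of `c`.
-/

section

variable {H : Type*} [NormedAddCommGroup H] [InnerProductSpace ℝ H]
  {C : Set (Submodule ℝ H)} {m l : ℕ}

lemma HasMAP.exists_forall_sum_le (hMAP : HasMAP C) {ι : Type*} (G : ι → H) (s : Finset ι) :
    ∃ V₀ ∈ C, ∀ V ∈ C,
      ∑ i ∈ s, infDist (G i) (V₀ : Set H) ^ 2 ≤ ∑ i ∈ s, infDist (G i) (V : Set H) ^ 2 := by
  let e := s.equivFin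
  have totalErr_eq (V : Submodule ℝ H) :
      totalErr (fun t => G (e.symm t)) V = ∑ i ∈ s, infDist (G i) (V : Set H) ^ 2 := by
    rw [totalErr, ← sum_coe_sort s]
    exact e.symm.sum_comp fun i : s => infDist (G i) (V : Set H) ^ 2
  obtain ⟨V₀, hV₀, hmin⟩ := hMAP _ fun t => G (e.symm t)
  exact ⟨V₀, hV₀, fun V hV => by simpa only [totalErr_eq] using hmin V hV⟩

lemma exists_isBestBundle (hMAP : HasMAP C) (F : Fin m → H) (c : Fin m → Fin l) :
    ∃ V, IsBestBundle C F c V := by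
  choose V hVC hVmin using fun j => hMAP.exists_forall_sum_le F (univ.filter fun i => c i = j)
  exact ⟨V, hVC, hVmin⟩

lemma IsBestBundle.gamma_le {F : Fin m → H} {c : Fin m → Fin l} {V W : Fin l → Submodule ℝ H}
    (hV : IsBestBundle C F c V) (hW : ∀ j, W j ∈ C) : Gamma F c V ≤ Gamma F c W := by
  have gamma_eq (U : Fin l → Submodule ℝ H) : Gamma F c U =
      ∑ j, ∑ i ∈ univ.filter (fun i => c i = j), infDist (F i) (U j : Set H) ^ 2 := by
    rw [Gamma, ← sum_fiberwise univ c]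
    refine sum_congr rfl fun j _ => sum_congr rfl fun i hi => ?_
    rw [(mem_filter.mp hi).2]
  rw [gamma_eq, gamma_eq]
  exact sum_le_sum fun j _ => hV.2 j (W j) (hW j)

lemma eBundle_le_gamma (F : Fin m → H) (c : Fin m → Fin l) (V : Fin l → Submodule ℝ H) :
    eBundle F V ≤ Gamma F c V :=
  sum_le_sum fun i _ => ciInf_le (Set.finite_range _).bddBelow (c i)

lemma exists_gamma_le_eBundle [NeZero l] (F : Fin m → H) (V : Fin l → Submodule ℝ H) :
    ∃ c, Gamma F c V ≤ eBundle F V := by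
  choose c hc using fun i => Finite.exists_min fun j => infDist (F i) (V j : Set H) ^ 2
  exact ⟨c, sum_le_sum fun i _ => le_ciInf (hc i)⟩

lemma exists_isGammaMinimal [NeZero l] (hMAP : HasMAP C) (F : Fin m → H) :
    ∃ (c₀ : Fin m → Fin l) (V₀ : Fin l → Submodule ℝ H), IsGammaMinimal C F c₀ V₀ := by
  choose V hV using exists_isBestBundle (l := l) hMAP F
  obtain ⟨c₀, hc₀⟩ := Finite.exists_min fun c => Gamma F c (V c)
  exact ⟨c₀, V c₀, hV c₀, fun c W hW => (hc₀ c).trans ((hV c).gamma_le hW.1)⟩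

lemma IsGammaMinimal.eBundle_le [NeZero l] (hMAP : HasMAP C) {F : Fin m → H} {c₀ : Fin m → Fin l}
    {V₀ V : Fin l → Submodule ℝ H} (h : IsGammaMinimal C F c₀ V₀) (hV : ∀ j, V j ∈ C) :
    eBundle F V₀ ≤ eBundle F V := by
  obtain ⟨c, hc⟩ := exists_gamma_le_eBundle F V
  obtain ⟨W, hW⟩ := exists_isBestBundle hMAP F c
  calc eBundle F V₀ ≤ Gamma F c₀ V₀ := eBundle_le_gamma F c₀ V₀
    _ ≤ Gamma F c W := h.2 c W hW
    _ ≤ Gamma F c V := hW.gamma_le hV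
    _ ≤ eBundle F V := hc

end

theorem exists_optimal_bundle_general
    {H : Type*} [NormedAddCommGroup H] [InnerProductSpace ℝ H]
    (C : Set (Submodule ℝ H)) (hMAP : HasMAP C)
    {m l : ℕ} (F : Fin m → H) (hl : 1 ≤ l) :
    ∃ V0 : Fin l → Submodule ℝ H, (∀ j, V0 j ∈ C) ∧
      ∀ V : Fin l → Submodule ℝ H, (∀ j, V j ∈ C) → eBundle F V0 ≤ eBundle F V := by
  have : NeZero l := ⟨Nat.one_le_iff_ne_zero.mp hl⟩
  obtain ⟨c₀, V₀, h⟩ := exists_isGammaMinimal (l := l) hMAP F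
  exact ⟨V₀, h.1.1, fun V hV => h.eBundle_le hMAP hV⟩

/-- Existence of an optimal bundle for the non-linear least squares problem. -/
theorem exists_optimal_bundle
    {H : Type*} [NormedAddCommGroup H] [InnerProductSpace ℝ H] [CompleteSpace H]
    (C : Set (Submodule ℝ H)) (hC : ∀ V ∈ C, IsClosed (V : Set H))
    (hbot : (⊥ : Submodule ℝ H) ∈ C) (hMAP : HasMAP C)
    {m l : ℕ} (F : Fin m → H) (hl : 1 ≤ l) :
    ∃ V0 : Fin l → Submodule ℝ H, (∀ j, V0 j ∈ C) ∧
      ∀ V : Fin l → Submodule ℝ H, (∀ j, V j ∈ C) → eBundle F V0 ≤ eBundle F V :=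
  exists_optimal_bundle_general C hMAP F hl
end

section
/- Let H be a real Hilbert space, let C be a family of closed subspaces of H containing the zero subspace that has the Minimal Approximation Property, let F = (f_1, …, f_m) be a finite family of vectors in H, and let l ≥ 1. If V_0 is a bundle with components in C satisfying e(F, V_0) ≤ e(F, V) for every bundle V with components in C, then there exists a labeling c_0 such that V_0 ∈ W(c_0) and the pair (c_0, V_0) is Γ-minimal. -/
open Metric Finset

/- Every labeling gives an upper bound `e(F, V) ≤ Γ(c, V)`, with equality for a nearest-subspace
labeling of `V`. For an optimal bundle `V₀` and such a labeling `c₀`, replacing the component `V₀ j`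
by any `W ∈ C` changes `Γ(c₀, ·)` only on the cluster `c₀ = j`; a strictly better `W` would push
`e` below its minimum, so `V₀ ∈ W(c₀)`. Finally `Γ(c₀, V₀) = e(F, V₀) ≤ e(F, V) ≤ Γ(c, V)`. -/

section Bundles

variable {H : Type*} [NormedAddCommGroup H] [InnerProductSpace ℝ H] {m l : ℕ} (F : Fin m → H)

theorem eBundle_le_Gamma (c : Fin m → Fin l) (V : Fin l → Submodule ℝ H) :
    eBundle F V ≤ Gamma F c V :=
  sum_le_sum fun i _ => ciInf_le (Finite.bddBelow_range _) (c i)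

theorem exists_Gamma_eq_eBundle [Nonempty (Fin l)] (V : Fin l → Submodule ℝ H) :
    ∃ c : Fin m → Fin l, Gamma F c V = eBundle F V := by
  choose c hc using fun i =>
    exists_eq_ciInf_of_finite (f := fun j => infDist (F i) (V j : Set H) ^ 2)
  exact ⟨c, sum_congr rfl fun i _ => hc i⟩

theorem Gamma_update_add (c : Fin m → Fin l) (V : Fin l → Submodule ℝ H) (j : Fin l)
    (W : Submodule ℝ H) :
    Gamma F c (Function.update V j W) +
        ∑ i ∈ univ.filter (c · = j), infDist (F i) (V j : Set H) ^ 2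
      = Gamma F c V + ∑ i ∈ univ.filter (c · = j), infDist (F i) (W : Set H) ^ 2 := by
  have hin : ∀ (U : Fin l → Submodule ℝ H),
      ∑ i ∈ univ.filter (c · = j), infDist (F i) (U (c i) : Set H) ^ 2
        = ∑ i ∈ univ.filter (c · = j), infDist (F i) (U j : Set H) ^ 2 :=
    fun U => sum_congr rfl fun i hi => by rw [(mem_filter.mp hi).2]
  have hout :
      ∑ i ∈ univ.filter (¬c · = j), infDist (F i) (Function.update V j W (c i) : Set H) ^ 2 =
        ∑ i ∈ univ.filter (¬c · = j), infDist (F i) (V (c i) : Set H) ^ 2 :=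
    sum_congr rfl fun i hi => by rw [Function.update_of_ne (mem_filter.mp hi).2]
  unfold Gamma
  rw [← sum_filter_add_sum_filter_not univ (c · = j),
    ← sum_filter_add_sum_filter_not univ (c · = j), hin, hin, hout, Function.update_self]
  ring

variable {C : Set (Submodule ℝ H)} {V₀ : Fin l → Submodule ℝ H} {c₀ : Fin m → Fin l}

theorem isBestBundle_of_Gamma_eq_eBundle (hV₀ : ∀ j, V₀ j ∈ C)
    (hopt : ∀ V : Fin l → Submodule ℝ H, (∀ j, V j ∈ C) → eBundle F V₀ ≤ eBundle F V)
    (hc₀ : Gamma F c₀ V₀ = eBundle F V₀) : IsBestBundle C F c₀ V₀ := by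
  refine ⟨hV₀, fun j W hW => ?_⟩
  have hmem : ∀ k, Function.update V₀ j W k ∈ C := by
    intro k
    rcases eq_or_ne k j with rfl | hk
    · simpa using hW
    · simpa [Function.update_of_ne hk] using hV₀ k
  have hle : Gamma F c₀ V₀ ≤ Gamma F c₀ (Function.update V₀ j W) :=
    hc₀ ▸ (hopt _ hmem).trans (eBundle_le_Gamma F c₀ _)
  linarith [Gamma_update_add F c₀ V₀ j W]

theorem isGammaMinimal_of_Gamma_eq_eBundle (hV₀ : ∀ j, V₀ j ∈ C)
    (hopt : ∀ V : Fin l → Submodule ℝ H, (∀ j, V j ∈ C) → eBundle F V₀ ≤ eBundle F V)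
    (hc₀ : Gamma F c₀ V₀ = eBundle F V₀) : IsGammaMinimal C F c₀ V₀ :=
  ⟨isBestBundle_of_Gamma_eq_eBundle F hV₀ hopt hc₀, fun c V hV =>
    calc Gamma F c₀ V₀ = eBundle F V₀ := hc₀
      _ ≤ eBundle F V := hopt V hV.1
      _ ≤ Gamma F c V := eBundle_le_Gamma F c V⟩

end Bundles

theorem exists_isGammaMinimal_of_optimal_general
    {H : Type*} [NormedAddCommGroup H] [InnerProductSpace ℝ H]
    (C : Set (Submodule ℝ H))
    {m l : ℕ} (F : Fin m → H) (hl : 1 ≤ l)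
    (V0 : Fin l → Submodule ℝ H) (hV0 : ∀ j, V0 j ∈ C)
    (hopt : ∀ V : Fin l → Submodule ℝ H, (∀ j, V j ∈ C) → eBundle F V0 ≤ eBundle F V) :
    ∃ c0 : Fin m → Fin l, IsBestBundle C F c0 V0 ∧ IsGammaMinimal C F c0 V0 := by
  have : Nonempty (Fin l) := ⟨⟨0, hl⟩⟩
  obtain ⟨c0, hc0⟩ := exists_Gamma_eq_eBundle F V0
  have hmin := isGammaMinimal_of_Gamma_eq_eBundle F hV0 hopt hc0
  exact ⟨c0, hmin.1, hmin⟩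

/-- Every solution of the minimization problem arises from a `Γ`-minimal pair. -/
theorem exists_isGammaMinimal_of_optimal
    {H : Type*} [NormedAddCommGroup H] [InnerProductSpace ℝ H] [CompleteSpace H]
    (C : Set (Submodule ℝ H)) (hC : ∀ V ∈ C, IsClosed (V : Set H))
    (hbot : (⊥ : Submodule ℝ H) ∈ C) (hMAP : HasMAP C)
    {m l : ℕ} (F : Fin m → H) (hl : 1 ≤ l)
    (V0 : Fin l → Submodule ℝ H) (hV0 : ∀ j, V0 j ∈ C)
    (hopt : ∀ V : Fin l → Submodule ℝ H, (∀ j, V j ∈ C) → eBundle F V0 ≤ eBundle F V) :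
    ∃ c0 : Fin m → Fin l, IsBestBundle C F c0 V0 ∧ IsGammaMinimal C F c0 V0 :=
  exists_isGammaMinimal_of_optimal_general C F hl V0 hV0 hopt
end

section
/- Let H be a real Hilbert space, let C be a family of closed subspaces of H containing the zero subspace that has the Minimal Approximation Property, let F = (f_1, …, f_m) be a finite family of vectors in H, and let l ≥ 1. Let c be a labeling and V ∈ W(c) a best bundle for c with Γ(c, V) > e(F, V). Let c' ∈ Ω(V) be a best partition for V and let V' ∈ W(c'). Then Γ(c', V') ≤ e(F, V) < Γ(c, V); in particular the value of Γ strictly decreases after one iteration of the alternating minimization. -/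
open Metric Finset

/-- `c ∈ Ω(V)`: the labeling `c` is a best partition for the bundle `V`. -/
def IsBestPartition {H : Type*} [NormedAddCommGroup H] [InnerProductSpace ℝ H]
    {m l : ℕ} (F : Fin m → H) (V : Fin l → Submodule ℝ H) (c : Fin m → Fin l) : Prop :=
  ∀ (i : Fin m) (h : Fin l),
    Metric.infDist (F i) (V (c i) : Set H) ≤ Metric.infDist (F i) (V h : Set H)

/-!
Relabelling each point to its nearest subspace of `V` turns `Γ(c', V)` into `e(F, V)`, and
re-optimising each subspace on its class of `c'` can only lower `Γ(c', ·)` further.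
-/

section

variable {H : Type*} [NormedAddCommGroup H] [InnerProductSpace ℝ H] {m l : ℕ}

theorem eBundle_eq_Gamma_of_isBestPartition {F : Fin m → H} {V : Fin l → Submodule ℝ H}
    {c : Fin m → Fin l} (hc : IsBestPartition F V c) : eBundle F V = Gamma F c V := by
  refine Finset.sum_congr rfl fun i _ => IsLeast.csInf_eq ⟨⟨c i, rfl⟩, ?_⟩
  rintro _ ⟨j, rfl⟩
  exact pow_le_pow_left₀ infDist_nonneg (hc i j) 2

theorem Gamma_eq_sum_fiberwise (F : Fin m → H) (c : Fin m → Fin l) (V : Fin l → Submodule ℝ H) :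
    Gamma F c V =
      ∑ j, ∑ i ∈ univ.filter (fun i => c i = j), infDist (F i) (V j : Set H) ^ 2 := by
  rw [Gamma, ← Finset.sum_fiberwise univ c]
  refine Finset.sum_congr rfl fun j _ => Finset.sum_congr rfl fun i hi => ?_
  rw [(Finset.mem_filter.mp hi).2]

theorem IsBestBundle.Gamma_le {C : Set (Submodule ℝ H)} {F : Fin m → H} {c : Fin m → Fin l}
    {V : Fin l → Submodule ℝ H} (hV : IsBestBundle C F c V) {W : Fin l → Submodule ℝ H}
    (hW : ∀ j, W j ∈ C) : Gamma F c V ≤ Gamma F c W := by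
  rw [Gamma_eq_sum_fiberwise, Gamma_eq_sum_fiberwise]
  exact Finset.sum_le_sum fun j _ => hV.2 j (W j) (hW j)

end

theorem Gamma_strict_decrease_general
    {H : Type*} [NormedAddCommGroup H] [InnerProductSpace ℝ H]
    (C : Set (Submodule ℝ H))
    {m l : ℕ} (F : Fin m → H)
    (c : Fin m → Fin l) (V : Fin l → Submodule ℝ H) (hV : IsBestBundle C F c V)
    (hgt : eBundle F V < Gamma F c V)
    (c' : Fin m → Fin l) (hc' : IsBestPartition F V c')
    (V' : Fin l → Submodule ℝ H) (hV' : IsBestBundle C F c' V') :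
    Gamma F c' V' ≤ eBundle F V ∧ eBundle F V < Gamma F c V := by
  refine ⟨?_, hgt⟩
  rw [eBundle_eq_Gamma_of_isBestPartition hc']
  exact hV'.Gamma_le hV.1

/-- One step of the alternating minimization strictly decreases `Γ` when the
current pair is not yet consistent. -/
theorem Gamma_strict_decrease
    {H : Type*} [NormedAddCommGroup H] [InnerProductSpace ℝ H] [CompleteSpace H]
    (C : Set (Submodule ℝ H)) (hC : ∀ V ∈ C, IsClosed (V : Set H))
    (hbot : (⊥ : Submodule ℝ H) ∈ C) (hMAP : HasMAP C)
    {m l : ℕ} (F : Fin m → H) (hl : 1 ≤ l)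
    (c : Fin m → Fin l) (V : Fin l → Submodule ℝ H) (hV : IsBestBundle C F c V)
    (hgt : eBundle F V < Gamma F c V)
    (c' : Fin m → Fin l) (hc' : IsBestPartition F V c')
    (V' : Fin l → Submodule ℝ H) (hV' : IsBestBundle C F c' V') :
    Gamma F c' V' ≤ eBundle F V ∧ eBundle F V < Gamma F c V :=
  Gamma_strict_decrease_general C F c V hV hgt c' hc' V' hV'
end

section
/- Let f_1, …, f_m be vectors in ℝ^N, let l ≥ 1, and let n_1, …, n_l be positive integers. Then there exists a bundle V_0 = (V_1^0, …, V_l^0) of linear subspaces of ℝ^N with dim V_j^0 ≤ n_j for each j, such that Σ_{i=1}^m min_{1≤j≤l} dist(f_i, V_j^0)² ≤ Σ_{i=1}^m min_{1≤j≤l} dist(f_i, V_j)² for every l-tuple (V_1, …, V_l) of linear subspaces of ℝ^N with dim V_j ≤ n_j for each j. -/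
/-!
A subspace of dimension at most `n` is the span of `n` pairwise orthogonal vectors, each of norm
`0` or `1`, and for such a family `v` the distance from `x` to the span is
`‖x - ∑ a, ⟪v a, x⟫ • v a‖`, a continuous function of `v`. These families form a compact set, so
the cost of a bundle, written as a function of one family per subspace, attains its minimum.
-/

open Metric

theorem continuous_ciInf_of_fintype {α β κ : Type*} [TopologicalSpace α]
    [ConditionallyCompleteLinearOrder β] [TopologicalSpace β] [OrderTopology β]
    [Fintype κ] [Nonempty κ] {g : κ → α → β} (hg : ∀ j, Continuous (g j)) :
    Continuous fun x => ⨅ j, g j x := by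
  simpa only [Finset.inf'_univ_eq_ciInf] using
    Continuous.finset_inf'_apply Finset.univ_nonempty fun j _ => hg j

section
open scoped InnerProductSpace
variable {𝕜 E : Type*} [RCLike 𝕜] [NormedAddCommGroup E] [InnerProductSpace 𝕜 E]

theorem Submodule.infDist_eq_norm_sub_starProjection (K : Submodule 𝕜 E)
    [K.HasOrthogonalProjection] (x : E) :
    infDist x (K : Set E) = ‖x - K.starProjection x‖ := by
  rw [K.starProjection_minimal, infDist_eq_iInf]
  simp only [dist_eq_norm]
  rfl

variable (𝕜) in
def IsPartialOrthonormal {ι : Type*} (v : ι → E) : Prop :=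
  (∀ a, v a = 0 ∨ ‖v a‖ = 1) ∧ Pairwise fun a b => ⟪v a, v b⟫_𝕜 = 0

namespace IsPartialOrthonormal
variable {ι : Type*} [Fintype ι] {v : ι → E}

theorem inner_sub_sum_inner_smul (hv : IsPartialOrthonormal 𝕜 v) (x : E) (b : ι) :
    ⟪x - ∑ a, ⟪v a, x⟫_𝕜 • v a, v b⟫_𝕜 = 0 := by
  classical
  rcases hv.1 b with hb | hb
  · simp [hb]
  rw [inner_sub_left, sum_inner, Finset.sum_eq_single b (fun a _ hab => by
    rw [inner_smul_left, hv.2 hab, mul_zero]) (by simp), inner_smul_left,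
    inner_self_eq_norm_sq_to_K, hb, inner_conj_symm]
  simp

theorem infDist_span_eq (hv : IsPartialOrthonormal 𝕜 v) (x : E) :
    infDist x (Submodule.span 𝕜 (Set.range v) : Set E) =
      ‖x - ∑ a, ⟪v a, x⟫_𝕜 • v a‖ := by
  have := FiniteDimensional.span_of_finite 𝕜 (Set.finite_range v)
  rw [Submodule.infDist_eq_norm_sub_starProjection]
  congr 2
  refine Submodule.eq_starProjection_of_mem_of_inner_eq_zero
    (Submodule.sum_mem _ fun a _ => Submodule.smul_mem _ _ (Submodule.subset_span ⟨a, rfl⟩))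
    fun w hw => ?_
  have hspan : Submodule.span 𝕜 (Set.range v) ≤ (𝕜 ∙ (x - ∑ a, ⟪v a, x⟫_𝕜 • v a))ᗮ := by
    rw [Submodule.span_le]
    rintro _ ⟨b, rfl⟩
    exact Submodule.mem_orthogonal_singleton_iff_inner_right.2
      (hv.inner_sub_sum_inner_smul x b)
  exact Submodule.mem_orthogonal_singleton_iff_inner_right.1 (hspan hw)

end IsPartialOrthonormal

variable {ι : Type*}

theorem isCompact_setOf_isPartialOrthonormal [ProperSpace E] :
    IsCompact {v : ι → E | IsPartialOrthonormal 𝕜 v} := by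
  have hbounded : IsCompact (Set.univ.pi fun _ : ι => insert (0 : E) (sphere 0 1)) :=
    isCompact_univ_pi fun _ => (isCompact_sphere 0 1).insert 0
  have hpairwise : IsClosed {v : ι → E | Pairwise fun a b => ⟪v a, v b⟫_𝕜 = 0} := by
    simp only [Pairwise, Set.ofPred_forall]
    exact isClosed_iInter fun a => isClosed_iInter fun b => isClosed_iInter fun _ =>
      isClosed_eq (by fun_prop) continuous_const
  convert hbounded.inter_right hpairwise using 1
  ext v
  simp [IsPartialOrthonormal]

section extend
variable {κ : Type*} {u : κ → E} {e : κ → ι}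

theorem Orthonormal.isPartialOrthonormal_extend_zero (hu : Orthonormal 𝕜 u)
    (he : e.Injective) :
    IsPartialOrthonormal 𝕜 (Function.extend e u (0 : ι → E)) := by
  have hcases : ∀ a, (∃ k, e k = a ∧ Function.extend e u (0 : ι → E) a = u k) ∨
      Function.extend e u (0 : ι → E) a = 0 := by
    intro a
    by_cases ha : ∃ k, e k = a
    · obtain ⟨k, rfl⟩ := ha
      exact Or.inl ⟨k, rfl, he.extend_apply u (0 : ι → E) k⟩
    · exact Or.inr (Function.extend_apply' u (0 : ι → E) a ha)
  refine ⟨fun a => ?_, fun a b hab => ?_⟩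
  · rcases hcases a with ⟨k, -, hk⟩ | h0
    · exact Or.inr (hk ▸ hu.1 k)
    · exact Or.inl h0
  · rcases hcases a with ⟨k, rfl, hk⟩ | h0
    · rcases hcases b with ⟨k', rfl, hk'⟩ | h0'
      · rw [hk, hk']
        exact hu.2 fun h => hab (congrArg e h)
      · simp [h0']
    · simp [h0]

theorem span_range_extend_zero (he : e.Injective) :
    Submodule.span 𝕜 (Set.range (Function.extend e u (0 : ι → E))) =
      Submodule.span 𝕜 (Set.range u) := by
  rw [Set.range_extend he, Submodule.span_union, sup_eq_left, Submodule.span_le]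
  rintro _ ⟨a, -, rfl⟩
  exact Submodule.zero_mem _

end extend

theorem exists_isPartialOrthonormal_span_eq (K : Submodule 𝕜 E) [FiniteDimensional 𝕜 K]
    {n : ℕ} (hK : Module.finrank 𝕜 K ≤ n) :
    ∃ v : Fin n → E, IsPartialOrthonormal 𝕜 v ∧ Submodule.span 𝕜 (Set.range v) = K := by
  set b := stdOrthonormalBasis 𝕜 K
  have hb : Orthonormal 𝕜 (K.subtypeₗᵢ ∘ b) := b.orthonormal.comp_linearIsometry _
  refine ⟨_, hb.isPartialOrthonormal_extend_zero (Fin.castLE_injective hK), ?_⟩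
  rw [span_range_extend_zero (Fin.castLE_injective hK), Set.range_comp]
  change Submodule.span 𝕜 (K.subtype '' _) = K
  rw [Submodule.span_image, ← b.coe_toBasis, b.toBasis.span_eq, Submodule.map_subtype_top]

theorem finrank_span_range_le {n : ℕ} (v : Fin n → E) :
    Module.finrank 𝕜 (Submodule.span 𝕜 (Set.range v)) ≤ n := by
  simpa [Set.finrank] using finrank_range_le_card (R := 𝕜) v

variable [Fintype ι]

noncomputable def bundleCost {κ : Type*} (f : ι → E) (V : κ → Submodule 𝕜 E) : ℝ :=
  ∑ i, ⨅ j, infDist (f i) (V j : Set E) ^ 2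

variable {κ : Type*} [Fintype κ] [Nonempty κ]

theorem continuousOn_bundleCost_span (f : ι → E) (n : κ → ℕ) :
    ContinuousOn
      (fun v : ∀ j, Fin (n j) → E => bundleCost f fun j => Submodule.span 𝕜 (Set.range (v j)))
      (Set.univ.pi fun _ => {w | IsPartialOrthonormal 𝕜 w}) := by
  refine ContinuousOn.congr
    (f := fun v => ∑ i, ⨅ j, ‖f i - ∑ a, ⟪v j a, f i⟫_𝕜 • v j a‖ ^ 2)
    (Continuous.continuousOn ?_) fun v hv => ?_
  · exact continuous_finsetSum _ fun i _ => continuous_ciInf_of_fintype fun j => by fun_prop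
  · simp only [bundleCost, ((Set.mem_univ_pi.1 hv) _).infDist_span_eq]

theorem exists_optimal_subspace_bundle [FiniteDimensional 𝕜 E] (f : ι → E) (n : κ → ℕ) :
    ∃ V0 : κ → Submodule 𝕜 E, (∀ j, Module.finrank 𝕜 (V0 j) ≤ n j) ∧
      ∀ V : κ → Submodule 𝕜 E, (∀ j, Module.finrank 𝕜 (V j) ≤ n j) →
        bundleCost f V0 ≤ bundleCost f V := by
  have := FiniteDimensional.proper_rclike 𝕜 E
  have hzero : (0 : ∀ j, Fin (n j) → E) ∈ Set.univ.pi fun _ => {w | IsPartialOrthonormal 𝕜 w} :=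
    fun _ _ => ⟨fun _ => Or.inl rfl, fun _ _ _ => inner_zero_left _⟩
  obtain ⟨v0, -, hmin⟩ :=
    (isCompact_univ_pi fun _ => isCompact_setOf_isPartialOrthonormal).exists_isMinOn
      ⟨_, hzero⟩ (continuousOn_bundleCost_span f n)
  refine ⟨fun j => Submodule.span 𝕜 (Set.range (v0 j)), fun j => finrank_span_range_le _,
    fun V hV => ?_⟩
  choose w hw hspan using fun j => exists_isPartialOrthonormal_span_eq (V j) (hV j)
  simpa only [Set.mem_ofPred_eq, hspan] using hmin (Set.mem_univ_pi.2 hw)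

end

theorem exists_optimal_bundle_rn_dims_general {N m : ℕ} (f : Fin m → EuclideanSpace ℝ (Fin N))
    (l : ℕ) (hl : 1 ≤ l) (n : Fin l → ℕ) :
    ∃ V0 : Fin l → Submodule ℝ (EuclideanSpace ℝ (Fin N)),
      (∀ j, Module.finrank ℝ (V0 j) ≤ n j) ∧
      ∀ V : Fin l → Submodule ℝ (EuclideanSpace ℝ (Fin N)),
        (∀ j, Module.finrank ℝ (V j) ≤ n j) →
        (∑ i, ⨅ j, Metric.infDist (f i) (V0 j : Set (EuclideanSpace ℝ (Fin N))) ^ 2) ≤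
          ∑ i, ⨅ j, Metric.infDist (f i) (V j : Set (EuclideanSpace ℝ (Fin N))) ^ 2 :=
  have : NeZero l := ⟨by omega⟩
  exists_optimal_subspace_bundle f n

/-- Existence of an optimal bundle of `l` subspaces of `ℝ^N` with prescribed dimension
bounds `n_1, …, n_l`. -/
theorem exists_optimal_bundle_rn_dims {N m : ℕ} (f : Fin m → EuclideanSpace ℝ (Fin N))
    (l : ℕ) (hl : 1 ≤ l) (n : Fin l → ℕ) (hn : ∀ j, 1 ≤ n j) :
    ∃ V0 : Fin l → Submodule ℝ (EuclideanSpace ℝ (Fin N)),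
      (∀ j, Module.finrank ℝ (V0 j) ≤ n j) ∧
      ∀ V : Fin l → Submodule ℝ (EuclideanSpace ℝ (Fin N)),
        (∀ j, Module.finrank ℝ (V j) ≤ n j) →
        (∑ i, ⨅ j, Metric.infDist (f i) (V0 j : Set (EuclideanSpace ℝ (Fin N))) ^ 2) ≤
          ∑ i, ⨅ j, Metric.infDist (f i) (V j : Set (EuclideanSpace ℝ (Fin N))) ^ 2 :=
  exists_optimal_bundle_rn_dims_general f l hl n
end
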